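/- arXiv:2110.08996 — 3 statements merged into one kernel-verified Lean document; each statement's English description precedes it below -/
import Mathlib

section
/- Let W, Ŵ ∈ ℝ^{d₁×d₀} be matrices such that |W_{ij} − Ŵ_{ij}| ≤ ε/(d₀·d₁) for all entries. Then for all x ∈ ℝ^{d₀} with ‖x‖₂ ≤ 1, |σ(∑_{i=1}^{d₁} σ((W x)_i)) − σ(∑_{i=1}^{d₁} σ((Ŵ x)_i))| ≤ ε, where σ applied to a real number is max(·,0). -/
theorem relu_layer_perturbation {d₀ d₁ : ℕ} (W W' : Matrix (Fin d₁) (Fin d₀) ℝ)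
    (ε : ℝ) (hε : 0 < ε)
    (h : ∀ i j, |W i j - W' i j| ≤ ε / (d₀ * d₁)) :
    ∀ x : Fin d₀ → ℝ, Real.sqrt (∑ i, (x i) ^ 2) ≤ 1 →
      |max (∑ i, max (W.mulVec x i) 0) 0 - max (∑ i, max (W'.mulVec x i) 0) 0| ≤ ε := by
  intro x hx
  have hxj : ∀ j, |x j| ≤ 1 := by
    intro j
    have h1 : (x j) ^ 2 ≤ ∑ i, (x i) ^ 2 :=
      Finset.single_le_sum (fun i _ => sq_nonneg (x i)) (Finset.mem_univ j)
    have := Real.sqrt_le_sqrt h1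
    rw [Real.sqrt_sq_eq_abs] at this
    exact this.trans hx
  have key : ∀ i, |W.mulVec x i - W'.mulVec x i| ≤ ε / (d₀ * d₁) * d₀ := by
    intro i
    have : W.mulVec x i - W'.mulVec x i = ∑ j, (W i j - W' i j) * x j := by
      simp [Matrix.mulVec, dotProduct, Finset.sum_sub_distrib, sub_mul]
    rw [this]
    calc |∑ j, (W i j - W' i j) * x j| ≤ ∑ j, |(W i j - W' i j) * x j| :=
          Finset.abs_sum_le_sum_abs _ _
      _ ≤ ∑ j : Fin d₀, ε / (d₀ * d₁) := by
          apply Finset.sum_le_sum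
          intro j _
          rw [abs_mul]
          calc |W i j - W' i j| * |x j| ≤ (ε / (d₀ * d₁)) * 1 := by
                apply mul_le_mul (h i j) (hxj j) (abs_nonneg _)
                positivity
            _ = ε / (d₀ * d₁) := mul_one _
      _ = ε / (d₀ * d₁) * d₀ := by simp [mul_comm]
  have step1 : |max (∑ i, max (W.mulVec x i) 0) 0 - max (∑ i, max (W'.mulVec x i) 0) 0|
      ≤ |(∑ i, max (W.mulVec x i) 0) - ∑ i, max (W'.mulVec x i) 0| :=
    abs_max_sub_max_le_abs _ _ _
  have step2 : |(∑ i, max (W.mulVec x i) 0) - ∑ i, max (W'.mulVec x i) 0|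
      ≤ ∑ i : Fin d₁, ε / (d₀ * d₁) * d₀ := by
    rw [← Finset.sum_sub_distrib]
    calc |∑ i, (max (W.mulVec x i) 0 - max (W'.mulVec x i) 0)|
        ≤ ∑ i, |max (W.mulVec x i) 0 - max (W'.mulVec x i) 0| :=
          Finset.abs_sum_le_sum_abs _ _
      _ ≤ ∑ i : Fin d₁, ε / (d₀ * d₁) * d₀ := by
          apply Finset.sum_le_sum
          intro i _
          exact (abs_max_sub_max_le_abs _ _ _).trans (key i)
  have step3 : (∑ i : Fin d₁, ε / (d₀ * d₁) * d₀ : ℝ) ≤ ε := by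
    rw [Finset.sum_const, Finset.card_univ, Fintype.card_fin, nsmul_eq_mul]
    rcases Nat.eq_zero_or_pos d₀ with h0 | h0
    · simp [h0]; positivity
    rcases Nat.eq_zero_or_pos d₁ with h1 | h1
    · simp [h1]; positivity
    have : (d₁ : ℝ) * (ε / (d₀ * d₁) * d₀) = ε := by
      field_simp
    rw [this]
  linarith [step1.trans step2, step3]
end

section
/- Define F_pruned^d = { x ↦ σ(∑_{i=1}^d x_i σ(∑_{j=1}^d v_j w_j^i)) : v_j, w_j^i ∈ {−1, 0, 1} } and F_bin^d = { same form with v_j, w_j^i ∈ {−1, 1} }. The function f(x) = σ(∑_{i=1}^d i·x_i) belongs to F_pruned^d. -/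
/-- Pruned one-hidden-layer width-`d` binary networks: weights in `{-1, 0, 1}`. -/
def Fpruned (d : ℕ) : Set ((Fin d → ℝ) → ℝ) :=
  { f | ∃ v : Fin d → ℝ, ∃ w : Fin d → Fin d → ℝ,
      (∀ j, v j = -1 ∨ v j = 0 ∨ v j = 1) ∧
      (∀ j i, w j i = -1 ∨ w j i = 0 ∨ w j i = 1) ∧
      f = fun x => max (∑ i, x i * max (∑ j, v j * w j i) 0) 0 }

theorem f_mem_Fpruned (d : ℕ) :
    (fun x : Fin d → ℝ => max (∑ i : Fin d, ((i.val : ℝ) + 1) * x i) 0) ∈ Fpruned d := by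
  refine ⟨fun _ => 1, fun j i => if j.val ≤ i.val then 1 else 0, fun j => Or.inr (Or.inr rfl),
    fun j i => by by_cases h : j.val ≤ i.val <;> simp [h], ?_⟩
  funext x
  congr 1
  apply Finset.sum_congr rfl
  intro i _
  have hsum : (∑ j : Fin d, (1 : ℝ) * if j.val ≤ i.val then 1 else 0) = (i.val : ℝ) + 1 := by
    simp only [one_mul]
    rw [Finset.sum_boole]
    have hfil : Finset.univ.filter (fun j : Fin d => j.val ≤ i.val) = Finset.Iic i := by
      ext j
      simp only [Finset.mem_filter, Finset.mem_univ, true_and, Finset.mem_Iic, Fin.le_def]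
    rw [hfil]
    simp [Fin.card_Iic]
  rw [hsum, max_eq_left (by positivity), mul_comm]
end

section
/- For d ≥ 2, the function f(x) = σ(∑_{i=1}^d i·x_i) does not belong to F_bin^d = { x ↦ σ(∑_{i=1}^d x_i σ(∑_{j=1}^d z_j^i)) : z_j^i ∈ {−1, 1} }. In particular, no choice of signs z_j^i ∈ {±1} can make ∑_{j=1}^d z_j^i equal to an integer of parity different from d; since the coefficient of x_d in f is d (and ∑_{j=1}^d z_j^d has the same parity as d, but the construction requires matching all coefficients 1,…,d simultaneously), the two functions differ on the nonnegative orthant. -/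
/-- One-hidden-layer width-`d` binary networks: weights in `{-1, 1}` (no pruning). -/
def Fbin (d : ℕ) : Set ((Fin d → ℝ) → ℝ) :=
  { f | ∃ z : Fin d → Fin d → ℝ,
      (∀ j i, z j i = -1 ∨ z j i = 1) ∧
      f = fun x => max (∑ i, x i * max (∑ j, z j i) 0) 0 }

theorem f_not_mem_Fbin (d : ℕ) (hd : 2 ≤ d) :
    (fun x : Fin d → ℝ => max (∑ i : Fin d, ((i.val : ℝ) + 1) * x i) 0) ∉ Fbin d := by
  rintro ⟨z, hz, hf⟩
  -- choose index i with (i.val + 1 + d) odd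
  obtain ⟨i, hi⟩ : ∃ i : Fin d, ¬ 2 ∣ ((i.val : ℤ) + 1 + d) := by
    rcases Nat.even_or_odd d with he | ho
    · refine ⟨⟨0, by omega⟩, ?_⟩
      obtain ⟨k, hk⟩ := he
      simp only [Fin.val_mk, Nat.cast_zero]
      omega
    · refine ⟨⟨1, by omega⟩, ?_⟩
      obtain ⟨k, hk⟩ := ho
      simp only [Fin.val_mk, Nat.cast_one]
      omega
  set S : ℝ := ∑ j, z j i with hS
  -- S = 2m - d for some integer m
  have hpar : ∃ m : ℤ, S = 2 * m - d := by
    refine ⟨∑ j, (if z j i = 1 then 1 else 0 : ℤ), ?_⟩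
    push_cast
    rw [hS, Finset.mul_sum]
    have hdsum : (d:ℝ) = ∑ _j : Fin d, (1:ℝ) := by simp
    rw [hdsum, ← Finset.sum_sub_distrib]
    refine Finset.sum_congr rfl fun j _ => ?_
    rcases hz j i with h | h <;> norm_num [h]
  -- evaluate at basis vector
  have key := congrFun hf (Pi.single i 1)
  simp only [Pi.single_apply, mul_ite, ite_mul, mul_one, one_mul, mul_zero, zero_mul,
    Finset.sum_ite_eq', Finset.mem_univ, if_true] at key
  have hpos : (0:ℝ) < (i.val : ℝ) + 1 := by positivity
  rw [max_eq_left hpos.le] at key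
  have hSmax : max S 0 = (i.val : ℝ) + 1 := by
    rw [key, max_eq_left (le_max_right _ _)]
  have hSeq : S = (i.val : ℝ) + 1 := by
    rcases le_or_gt S 0 with h | h
    · rw [max_eq_right h] at hSmax; linarith
    · rwa [max_eq_left h.le] at hSmax
  obtain ⟨m, hm⟩ := hpar
  apply hi
  have : (2 * m : ℝ) = (i.val : ℤ) + 1 + d := by push_cast; linarith [hm ▸ hSeq]
  exact ⟨m, by exact_mod_cast this.symm⟩
end
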